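/- arXiv:1804.01801 — 5 statements merged into one kernel-verified Lean document; each statement's English description precedes it below -/
import Mathlib

section
/- For any integer m and nonnegative integer k, the sum over i from 0 to k of C(m-i, i) * C(i-m+k, k-i) equals the sum over i from 0 to k+2 of C(m-i, i) * C(i-m+k+2, k+2-i). -/
/-!
Write `S(r, k) = ∑ᵢ C(r - i, i) C(i - r + k, k - i)`. It is convenient to decouple the upper
argument of the second factor: with `F(r, s, k) = ∑ᵢ C(r - i, i) C(i + s, k - i)`
(`Ring.chooseSum`) we have `S(r, k) = F(r, k - r, k)`, and Pascal's rule in either factor gives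
`F(r, s + 1, k + 1) = F(r, s, k + 1) + F(r, s, k)` and
`F(r + 1, s, k + 1) = F(r, s, k + 1) + F(r - 1, s + 1, k)`.
Together these say `S(r + 1, k + 1) - S(r, k + 1) = S(r - 1, k) - S(r, k)`, so by induction on `k`
the sum `S(m, k)` does not depend on the integer `m`. At `m = k` the `i`-th term is
`C(k - i, i) C(i, k - i)`, which vanishes unless `2i = k`; hence `S(m, k) = [k even]`, a value
unchanged by `k ↦ k + 2`.
-/

/-- The generalized binomial coefficient `C(a, b) = a(a-1)⋯(a-b+1)/b!`
for an integer `a` and a natural number `b`, valued in `ℚ`. -/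
noncomputable def genChoose (a : ℤ) (b : ℕ) : ℚ :=
  (∏ i ∈ Finset.range b, ((a : ℚ) - i)) / (Nat.factorial b : ℚ)

open Finset Polynomial Ring

theorem Nat.choose_sub_mul_choose_sub (k i : ℕ) (hi : i ≤ k) :
    (k - i).choose i * i.choose (k - i) = if i + i = k then 1 else 0 := by
  split_ifs with h
  · rw [← h, Nat.add_sub_cancel, Nat.choose_self, one_mul]
  · rcases Nat.lt_or_gt_of_ne h with h | h
    · rw [Nat.choose_eq_zero_of_lt (by omega : i < k - i), mul_zero]
    · rw [Nat.choose_eq_zero_of_lt (by omega : k - i < i), zero_mul]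

theorem Nat.sum_choose_sub_mul_choose_sub (k : ℕ) :
    ∑ i ∈ range (k + 1), (k - i).choose i * i.choose (k - i) = if Even k then 1 else 0 := by
  rw [sum_congr rfl fun i hi => Nat.choose_sub_mul_choose_sub k i (mem_range_succ_iff.1 hi)]
  split_ifs with hk
  · obtain ⟨n, rfl⟩ := hk
    rw [sum_eq_single_of_mem n (by simp) fun i _ hi => if_neg (by omega), if_pos rfl]
  · exact sum_eq_zero fun i _ => if_neg fun h => hk ⟨i, h.symm⟩

namespace Ring

variable {R : Type*} [Ring R] [BinomialRing R]

def chooseSum (r s : R) (k : ℕ) : R :=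
  ∑ i ∈ range (k + 1), choose (r - i) i * choose (i + s) (k - i)

@[simp]
theorem chooseSum_zero (r s : R) : chooseSum r s 0 = 1 := by
  simp [chooseSum]

theorem chooseSum_add_one_right (r s : R) (k : ℕ) :
    chooseSum r (s + 1) (k + 1) = chooseSum r s (k + 1) + chooseSum r s k := by
  have pascal : ∀ i ∈ range (k + 1), choose (r - i) i * choose ((i : R) + (s + 1)) (k + 1 - i) =
      choose (r - i) i * choose ((i : R) + s) (k + 1 - i) +
        choose (r - i) i * choose ((i : R) + s) (k - i) := by
    intro i hi
    rw [Nat.sub_add_comm (mem_range_succ_iff.1 hi), ← add_assoc, choose_succ_succ, add_comm,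
      mul_add]
  rw [chooseSum, chooseSum, chooseSum, sum_range_succ _ (k + 1), sum_range_succ _ (k + 1),
    sum_congr rfl pascal, sum_add_distrib, Nat.sub_self, choose_zero_right, choose_zero_right]
  abel

theorem chooseSum_add_one_left (r s : R) (k : ℕ) :
    chooseSum (r + 1) s (k + 1) = chooseSum r s (k + 1) + chooseSum (r - 1) (s + 1) k := by
  have pascal : ∀ i ∈ range (k + 1),
      choose (r + 1 - (i + 1 : ℕ)) (i + 1) * choose ((i + 1 : ℕ) + s) (k + 1 - (i + 1)) =
      choose (r - (i + 1 : ℕ)) (i + 1) * choose ((i + 1 : ℕ) + s) (k + 1 - (i + 1)) +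
        choose (r - 1 - i) i * choose (i + (s + 1)) (k - i) := by
    intro i _
    rw [show r + 1 - (i + 1 : ℕ) = r - (i + 1 : ℕ) + 1 by push_cast; abel, choose_succ_succ,
      show r - (i + 1 : ℕ) = r - 1 - i by push_cast; abel, add_comm, add_mul,
      show ((i + 1 : ℕ) : R) + s = i + (s + 1) by push_cast; abel, Nat.add_sub_add_right]
  rw [chooseSum, chooseSum, chooseSum, sum_range_succ' _ (k + 1), sum_range_succ' _ (k + 1),
    sum_congr rfl pascal, sum_add_distrib, Nat.cast_zero, sub_zero, sub_zero, choose_zero_right,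
    choose_zero_right]
  abel

theorem chooseSum_add_one_sub (k : ℕ) (r : R) :
    chooseSum (r + 1) (k - (r + 1)) k = chooseSum r (k - r) k := by
  induction k generalizing r with
  | zero => simp
  | succ k ih =>
    have ih' := ih (r - 1)
    rw [sub_add_cancel, sub_sub_eq_add_sub] at ih'
    have shift : ((k + 1 : ℕ) : R) - r = k - r + 1 := by push_cast; abel
    rw [Nat.cast_succ, add_sub_add_right_eq_sub, chooseSum_add_one_left, ← Nat.cast_succ, shift,
      chooseSum_add_one_right, ih', sub_add_eq_add_sub]

theorem chooseSum_intCast_sub_eq_natCast (k : ℕ) (m : ℤ) :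
    chooseSum (m : R) (k - m) k = chooseSum (k : R) 0 k := by
  induction m using Int.inductionOn' (b := k) with
  | zero => simp
  | succ m _ ih => rw [Int.cast_add, Int.cast_one, chooseSum_add_one_sub, ih]
  | pred m _ ih => rw [← ih, ← chooseSum_add_one_sub, Int.cast_sub, Int.cast_one, sub_add_cancel]

theorem chooseSum_natCast_zero (k : ℕ) :
    chooseSum (k : R) 0 k = if Even k then 1 else 0 := by
  have term : ∀ i ∈ range (k + 1), choose ((k : R) - i) i * choose ((i : R) + 0) (k - i) =
      ((k - i).choose i * i.choose (k - i) : ℕ) := by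
    intro i hi
    rw [← Nat.cast_sub (mem_range_succ_iff.1 hi), add_zero, choose_natCast, choose_natCast,
      Nat.cast_mul]
  rw [chooseSum, sum_congr rfl term, ← Nat.cast_sum, Nat.sum_choose_sub_mul_choose_sub]
  split_ifs <;> simp

theorem chooseSum_intCast_sub (k : ℕ) (m : ℤ) :
    chooseSum (m : R) (k - m) k = if Even k then 1 else 0 := by
  rw [chooseSum_intCast_sub_eq_natCast, chooseSum_natCast_zero]

end Ring

theorem genChoose_eq_choose (a : ℤ) (b : ℕ) : genChoose a b = Ring.choose (a : ℚ) b := by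
  rw [Ring.choose_eq_smul, ← aeval_eq_smeval, aeval_def, eval₂_eq_eval_map, descPochhammer_map,
    descPochhammer_eval_eq_prod_range, genChoose, smul_eq_mul, div_eq_inv_mul]

theorem stmt0 (m : ℤ) (k : ℕ) :
    ∑ i ∈ Finset.range (k + 1),
        genChoose (m - i) i * genChoose ((i : ℤ) - m + k) (k - i) =
      ∑ i ∈ Finset.range (k + 3),
        genChoose (m - i) i * genChoose ((i : ℤ) - m + k + 2) (k + 2 - i) := by
  have lhs : ∑ i ∈ range (k + 1), genChoose (m - i) i * genChoose ((i : ℤ) - m + k) (k - i) =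
      chooseSum (m : ℚ) (k - m) k :=
    sum_congr rfl fun i _ => by simp only [genChoose_eq_choose]; push_cast; ring_nf
  have rhs : ∑ i ∈ range (k + 3),
      genChoose (m - i) i * genChoose ((i : ℤ) - m + k + 2) (k + 2 - i) =
        chooseSum (m : ℚ) ((k + 2 : ℕ) - m) (k + 2) :=
    sum_congr rfl fun i _ => by simp only [genChoose_eq_choose]; push_cast; ring_nf
  rw [lhs, rhs, chooseSum_intCast_sub, chooseSum_intCast_sub]
  simp only [Nat.even_add, even_two, iff_true]
end

section
/- For nonnegative integers m, k with m >= k, the sum over i from 0 to k of C(m-i, i) * C(i, k-i) is congruent to C(m+1, k) modulo 2. -/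
/-!
The sum is the coefficient of `X ^ k` in `S_m(X (1 + X))`, where
`S_m(y) = ∑ i, C(m - i, i) y ^ i` satisfies `S_{m+2} = S_{m+1} + y S_m`. The characteristic
polynomial `t² - t - X (1 + X)` has roots `1 + X` and `-X`, whose difference `1 + 2X` reduces to `1`
modulo 2; Binet's formula then gives `S_m(X (1 + X)) ≡ (1 + X) ^ (m + 1) + X ^ (m + 1)`, whose
coefficient of `X ^ k` is `C(m + 1, k)` for `k ≤ m`.
-/

open Finset Polynomial

section Jacobsthal

variable {R : Type*}

/-- The Jacobsthal polynomial `J_{n+1}`, evaluated at `y`. -/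
def jacobsthalSum [Semiring R] (y : R) (n : ℕ) : R :=
  ∑ p ∈ antidiagonal n, (p.2.choose p.1 : R) * y ^ p.1

lemma jacobsthalSum_eq_sum_range [Semiring R] (y : R) (n : ℕ) :
    jacobsthalSum y n = ∑ i ∈ range (n + 1), ((n - i).choose i : R) * y ^ i :=
  Nat.sum_antidiagonal_eq_sum_range_succ (fun i j => (j.choose i : R) * y ^ i) n

@[simp]
lemma jacobsthalSum_zero [Semiring R] (y : R) : jacobsthalSum y 0 = 1 := by
  simp [jacobsthalSum]

@[simp]
lemma jacobsthalSum_one [Semiring R] (y : R) : jacobsthalSum y 1 = 1 := by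
  simp [jacobsthalSum_eq_sum_range, sum_range_succ]

lemma jacobsthalSum_add_two [CommSemiring R] (y : R) (n : ℕ) :
    jacobsthalSum y (n + 2) = jacobsthalSum y (n + 1) + y * jacobsthalSum y n := by
  have h₁ : jacobsthalSum y (n + 1) =
      1 + ∑ p ∈ antidiagonal n, (p.2.choose (p.1 + 1) : R) * y ^ (p.1 + 1) := by
    rw [jacobsthalSum, Nat.sum_antidiagonal_succ]
    simp
  have h₂ : jacobsthalSum y (n + 2) =
      1 + ∑ p ∈ antidiagonal n, ((p.2 + 1).choose (p.1 + 1) : R) * y ^ (p.1 + 1) := by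
    rw [jacobsthalSum, Nat.sum_antidiagonal_succ', Nat.sum_antidiagonal_succ]
    simp
  rw [h₂, h₁, jacobsthalSum, mul_sum, add_assoc, ← sum_add_distrib]
  refine congrArg _ (sum_congr rfl fun p _ => ?_)
  rw [Nat.choose_succ_succ', Nat.cast_add]
  ring

lemma one_add_two_mul_mul_jacobsthalSum [CommRing R] (x : R) (n : ℕ) :
    (1 + 2 * x) * jacobsthalSum (x * (1 + x)) n = (1 + x) ^ (n + 1) - (-x) ^ (n + 1) := by
  induction n using Nat.twoStepInduction with
  | zero => rw [jacobsthalSum_zero]; ring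
  | one => rw [jacobsthalSum_one]; ring
  | more n ih₀ ih₁ =>
    rw [jacobsthalSum_add_two]
    linear_combination ih₁ + x * (1 + x) * ih₀

lemma coeff_jacobsthalSum_X_mul_one_add_X [CommSemiring R] {m k : ℕ} (hk : k ≤ m) :
    (jacobsthalSum (X * (1 + X) : R[X]) m).coeff k =
      ∑ i ∈ range (k + 1), ((m - i).choose i * i.choose (k - i) : R) := by
  rw [jacobsthalSum_eq_sum_range, finsetSum_coeff]
  simp only [mul_pow, coeff_natCast_mul, coeff_X_pow_mul', coeff_one_add_X_pow]
  rw [← sum_subset (range_subset_range.2 (Nat.succ_le_succ hk)) fun i _ hi => by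
    rw [if_neg (by simpa using hi), mul_zero]]
  exact sum_congr rfl fun i hi => by rw [if_pos (Nat.lt_succ_iff.1 (mem_range.1 hi))]

end Jacobsthal

theorem stmt3 (m k : ℕ) (h : k ≤ m) :
    (∑ i ∈ Finset.range (k + 1), Nat.choose (m - i) i * Nat.choose i (k - i)) ≡
      Nat.choose (m + 1) k [MOD 2] := by
  rw [← ZMod.natCast_eq_natCast_iff]
  have binet := congrArg (coeff · k) (one_add_two_mul_mul_jacobsthalSum (X : (ZMod 2)[X]) m)
  simp only [CharTwo.two_eq_zero, CharTwo.neg_eq, zero_mul, add_zero, one_mul, coeff_sub,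
    coeff_one_add_X_pow, coeff_X_pow, if_neg (show k ≠ m + 1 by omega), sub_zero,
    coeff_jacobsthalSum_X_mul_one_add_X h] at binet
  push_cast
  exact binet
end

section
/- For integers n, e with 2^e + 3 <= n <= 2^{e+1}, the generalized binomial coefficient C(-(n-2), 2^{e+1}+2-n) is congruent modulo 2 to C(2^{e+1}-1, n-3), and hence is odd. -/
/-!
Since `C(-r, k) = (-1)^k C(r + k - 1, k)` and `-1 ≡ 1 (mod 2)`, the coefficient is congruent to
`C(2^(e+1) - 1, 2^(e+1) + 2 - n) = C(2^(e+1) - 1, n - 3)`. All binary digits of `2^t - 1` are `1`,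
so by Lucas' theorem every `C(2^t - 1, k)` with `k < 2^t` is odd.
-/

theorem Int.ringChoose_neg_modEq_two (r : ℤ) (k : ℕ) :
    Ring.choose (-r) k ≡ Ring.choose (r + k - 1) k [ZMOD 2] := by
  have hsign : (Int.negOnePow k : ℤ) ≡ 1 [ZMOD 2] := by
    rw [Int.coe_negOnePow_natCast]
    simpa using (show (-1 : ℤ) ≡ 1 [ZMOD 2] by decide).pow k
  rw [Ring.choose_neg, Units.smul_def, smul_eq_mul]
  simpa using hsign.mul_right (Ring.choose (r + k - 1) k)

theorem Nat.odd_choose_two_pow_sub_one {k : ℕ} (t : ℕ) (hk : k ≤ 2 ^ t - 1) :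
    Odd ((2 ^ t - 1).choose k) := by
  induction t generalizing k with
  | zero => simp_all
  | succ t ih =>
    have : Fact (Nat.Prime 2) := ⟨Nat.prime_two⟩
    have hpow : 2 ^ (t + 1) = 2 * 2 ^ t := pow_succ' ..
    have hpos : 1 ≤ 2 ^ t := Nat.one_le_two_pow
    have hmod : (2 ^ (t + 1) - 1) % 2 = 1 := by omega
    have hdiv : (2 ^ (t + 1) - 1) / 2 = 2 ^ t - 1 := by omega
    have hlow : (1 : ℕ).choose (k % 2) = 1 := by
      rcases Nat.mod_two_eq_zero_or_one k with h | h <;> simp [h]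
    have hlucas :=
      Choose.choose_modEq_choose_mod_mul_choose_div_nat (p := 2) (n := 2 ^ (t + 1) - 1) (k := k)
    rw [hmod, hdiv, hlow, one_mul] at hlucas
    rw [Nat.odd_iff, hlucas, ← Nat.odd_iff]
    exact ih (by omega)

theorem stmt7 (n e : ℕ) (h1 : 2 ^ e + 3 ≤ n) (h2 : n ≤ 2 ^ (e + 1)) :
    Ring.choose (-((n : ℤ) - 2)) (2 ^ (e + 1) + 2 - n) ≡
        (Nat.choose (2 ^ (e + 1) - 1) (n - 3) : ℤ) [ZMOD 2] ∧
      Odd (Ring.choose (-((n : ℤ) - 2)) (2 ^ (e + 1) + 2 - n)) := by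
  set k := 2 ^ (e + 1) + 2 - n
  set m := 2 ^ (e + 1) - 1
  have hupper : ((n : ℤ) - 2) + k - 1 = m := by omega
  have hsymm : m.choose k = m.choose (n - 3) := by
    rw [← Nat.choose_symm (by omega)]
    congr 1
    omega
  have hmod : Ring.choose (-((n : ℤ) - 2)) k ≡ (m.choose (n - 3) : ℤ) [ZMOD 2] := by
    simpa only [hupper, Ring.choose_natCast, hsymm] using
      Int.ringChoose_neg_modEq_two ((n : ℤ) - 2) k
  refine ⟨hmod, ?_⟩
  have hodd : Odd (m.choose (n - 3) : ℤ) :=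
    (Nat.odd_choose_two_pow_sub_one (e + 1) (by omega)).natCast
  exact Int.odd_iff.mpr (Eq.trans hmod (Int.odd_iff.mp hodd))
end

section
/- In the truncated polynomial ring F_2[R]/(R^{m+1}), the element sum over k <= m of (sum over i of C(m-i,i)*C(i,k-i)) * R^k equals (1+R)^{m+1}. -/
/-!
With `y = (1 + X) X`, the inner sums are the coefficients of `F_m(y) = ∑_i C(m-i, i) yⁱ`, which
obeys the Fibonacci-type recurrence `F_{m+2} = F_{m+1} + y F_m`. When `a + b = 1` the Lucas
sequence `(a^{m+1} - b^{m+1}) / (a - b)` obeys the same recurrence with `y = -ab`. Over `𝔽₂`,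
`a = 1 + X` and `b = X` satisfy `a + b = a - b = 1` and `-ab = y`, so
`F_m(y) = (1 + X)^{m+1} + X^{m+1}`, and `X^{m+1}` vanishes in the quotient.
-/

open Polynomial Finset

theorem Nat.choose_sub_mul_choose_sub_eq_zero {m n : ℕ} (h : m < n) (i : ℕ) :
    (m - i).choose i * i.choose (n - i) = 0 := by
  rcases lt_or_ge (m - i) i with hi | hi
  · rw [Nat.choose_eq_zero_of_lt hi, zero_mul]
  · rw [Nat.choose_eq_zero_of_lt (by omega : i < n - i), mul_zero]

section
variable {R : Type*}

theorem sum_antidiagonal_choose_mul_pow_add_two [CommSemiring R] (y : R) (n : ℕ) :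
    ∑ p ∈ antidiagonal (n + 2), (p.2.choose p.1 : R) * y ^ p.1 =
      ∑ p ∈ antidiagonal (n + 1), (p.2.choose p.1 : R) * y ^ p.1 +
        y * ∑ p ∈ antidiagonal n, (p.2.choose p.1 : R) * y ^ p.1 := by
  rw [Nat.antidiagonal_succ_succ', Nat.antidiagonal_succ]
  simp only [sum_cons, sum_map, Function.Embedding.coe_prodMap, Function.Embedding.coeFn_mk,
    Function.Embedding.refl_apply, Prod.map_fst, Prod.map_snd, Nat.succ_eq_add_one,
    Nat.choose_succ_succ, Nat.choose_zero_right, Nat.choose_zero_succ, Nat.cast_add,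
    add_mul, mul_add, sum_add_distrib, mul_sum, pow_succ', mul_left_comm _ y]
  ring

theorem mul_sum_antidiagonal_choose_mul_neg_mul_pow [CommRing R] {a b : R} (hab : a + b = 1)
    (n : ℕ) :
    (a - b) * ∑ p ∈ antidiagonal n, (p.2.choose p.1 : R) * (-(a * b)) ^ p.1 =
      a ^ (n + 1) - b ^ (n + 1) := by
  induction n using Nat.twoStepInduction with
  | zero => simp
  | one => simp [Nat.antidiagonal_succ]; linear_combination (b - a) * hab
  | more n h₀ h₁ =>
    rw [sum_antidiagonal_choose_mul_pow_add_two]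
    linear_combination h₁ - a * b * h₀ - (a ^ (n + 2) - b ^ (n + 2)) * hab

theorem sum_antidiagonal_choose_mul_one_add_X_mul_X_pow [CommRing R] [CharP R 2] (n : ℕ) :
    ∑ p ∈ antidiagonal n, (p.2.choose p.1 : R[X]) * ((1 + X) * X) ^ p.1 =
      (1 + X) ^ (n + 1) + X ^ (n + 1) := by
  have hab : (1 + X : R[X]) + X = 1 := by rw [add_assoc, CharTwo.add_self_eq_zero, add_zero]
  simpa only [CharTwo.neg_eq, CharTwo.sub_eq_add, hab, one_mul] using
    mul_sum_antidiagonal_choose_mul_neg_mul_pow hab n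

variable [CommSemiring R]

theorem coeff_sum_antidiagonal_choose_mul_pow (m k : ℕ) :
    (∑ p ∈ antidiagonal m, (p.2.choose p.1 : R[X]) * ((1 + X) * X) ^ p.1).coeff k =
      ((∑ i ∈ range (k + 1), (m - i).choose i * i.choose (k - i) : ℕ) : R) := by
  rw [Nat.sum_antidiagonal_eq_sum_range_succ (fun i j => (j.choose i : R[X]) * ((1 + X) * X) ^ i)]
  simp only [finsetSum_coeff, mul_pow, coeff_natCast_mul, coeff_mul_X_pow', coeff_one_add_X_pow,
    mul_ite, mul_zero, ← sum_filter]
  push_cast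
  refine sum_subset (fun i hi => ?_) (fun i hi hi' => ?_)
  · simp only [mem_filter, mem_range] at hi ⊢
    omega
  · simp only [mem_filter, mem_range, not_and, not_le] at hi hi'
    rw [Nat.choose_eq_zero_of_lt (by omega : m - i < i), Nat.cast_zero, zero_mul]

theorem sum_range_sum_choose_mul_X_pow (m : ℕ) :
    ∑ k ∈ range (m + 1),
        ((∑ i ∈ range (k + 1), (m - i).choose i * i.choose (k - i) : ℕ) : R[X]) * X ^ k =
      ∑ p ∈ antidiagonal m, (p.2.choose p.1 : R[X]) * ((1 + X) * X) ^ p.1 := by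
  ext n
  rw [coeff_sum_antidiagonal_choose_mul_pow]
  simp only [finsetSum_coeff, coeff_natCast_mul, coeff_X_pow, mul_ite, mul_one, mul_zero,
    sum_ite_eq, mem_range]
  split_ifs with hn
  · rfl
  · rw [sum_eq_zero fun i _ => Nat.choose_sub_mul_choose_sub_eq_zero (by omega) i, Nat.cast_zero]

end

/-- In `F₂[R]/(R^{m+1})`, with `R` the class of `X`, we have
`∑_{k ≤ m} (∑_i C(m-i,i) C(i,k-i)) R^k = (1+R)^{m+1}`. -/
theorem stmt9 (m : ℕ) :
    ∑ k ∈ Finset.range (m + 1),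
        ((∑ i ∈ Finset.range (k + 1), Nat.choose (m - i) i * Nat.choose i (k - i) : ℕ) :
            Polynomial (ZMod 2) ⧸ Ideal.span {(X : Polynomial (ZMod 2)) ^ (m + 1)}) *
          (Ideal.Quotient.mk (Ideal.span {(X : Polynomial (ZMod 2)) ^ (m + 1)}) X) ^ k =
      (1 + Ideal.Quotient.mk (Ideal.span {(X : Polynomial (ZMod 2)) ^ (m + 1)}) X) ^ (m + 1) := by
  set π := Ideal.Quotient.mk (Ideal.span {(X : Polynomial (ZMod 2)) ^ (m + 1)})
  have hX : π X ^ (m + 1) = 0 := by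
    rw [← map_pow, Ideal.Quotient.eq_zero_iff_mem]
    exact Ideal.mem_span_singleton_self _
  have h := congrArg π
    ((sum_range_sum_choose_mul_X_pow m).trans (sum_antidiagonal_choose_mul_one_add_X_mul_X_pow m))
  simp only [map_sum, map_mul, map_pow, map_add, map_natCast, map_one] at h
  rw [h, hX, add_zero]
end

section
/- Let l = (l_1,...,l_n) with all l_i > 0. Call S subset of [n] short if sum_{i in S} l_i < sum_{i not in S} l_i, and long otherwise. For G subset of [n-1], a subgee means G union {n} is short. Define Gtilde = [n-1] - G and Gbar = Gtilde minus its maximum element. Define a partial order: S <= T if T contains elements t_1 > ... > t_k with s_i <= t_i where S = {s_1 > ... > s_k}. Prove: if G_1 and G_2 are subsets of [n-1] with Gbar_1 <= G_2 (in this order) and G_1 is a subgee, then G_2 is not a subgee. -/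
/-- The domination partial order on subsets of `Fin n`: `Dominates T S` means `S ≤ T`,
i.e. `T` contains distinct elements `t₁ > … > t_k` with `s_i ≤ t_i`, where
`S = {s₁ > … > s_k}`; equivalently, there is an injection `f : S → T` with `s ≤ f s`. -/
def Dominates {n : ℕ} (T S : Finset (Fin n)) : Prop :=
  ∃ f : Fin n → Fin n, Set.InjOn f ↑S ∧ ∀ i ∈ S, f i ∈ T ∧ i ≤ f i

/-- `Gtilde = [n-1] - G`, the complement of `G ⊆ [n-1]` inside `[n-1]`
(the ground set `Fin (n+1)` represents `[n]`, with `Fin.last n` playing the role of `n`). -/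
def gtilde {n : ℕ} (G : Finset (Fin (n + 1))) : Finset (Fin (n + 1)) :=
  (Finset.univ.erase (Fin.last n)) \ G

/-- `Gbar` is `Gtilde` with its maximum element removed. -/
def gbar {n : ℕ} (G : Finset (Fin (n + 1))) : Finset (Fin (n + 1)) :=
  (gtilde G).filter fun i => ∃ j ∈ gtilde G, i < j

/-- `S` is short for the length vector `l` if `∑_{i ∈ S} l i < ∑_{i ∉ S} l i`. -/
def IsShort {n : ℕ} (l : Fin (n + 1) → ℝ) (S : Finset (Fin (n + 1))) : Prop :=
  ∑ i ∈ S, l i < ∑ i ∈ Sᶜ, l i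

/-- `G ⊆ [n-1]` is a subgee if `G ∪ {n}` is short. -/
def IsSubgee {n : ℕ} (l : Fin (n + 1) → ℝ) (G : Finset (Fin (n + 1))) : Prop :=
  IsShort l (insert (Fin.last n) G)

/-!
If `G₁` is a subgee, the complement `Gtilde₁` of `G₁ ∪ {n}` is long. Trading the maximum of
`Gtilde₁` for `n`, the largest side, and then moving up in the domination order only increases
the total length, so `{n} ∪ G₂` is at least as long as `Gtilde₁`, hence long.
-/

open Finset

theorem Dominates.sum_le {n : ℕ} {l : Fin n → ℝ} (hl : ∀ i, 0 ≤ l i) (hmono : Monotone l)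
    {S T : Finset (Fin n)} (h : Dominates T S) : ∑ i ∈ S, l i ≤ ∑ i ∈ T, l i := by
  obtain ⟨f, hinj, hf⟩ := h
  calc ∑ i ∈ S, l i ≤ ∑ i ∈ S, l (f i) := sum_le_sum fun i hi => hmono (hf i hi).2
    _ = ∑ j ∈ S.image f, l j := (sum_image fun _ ha _ hb => hinj ha hb).symm
    _ ≤ ∑ j ∈ T, l j := sum_le_sum_of_subset_of_nonneg
        (image_subset_iff.mpr fun i hi => (hf i hi).1) (fun i _ _ => hl i)

theorem sum_le_add_sum_filter_exists_lt {α : Type*} [LinearOrder α] (A : Finset α)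
    [DecidablePred fun i => ∃ j ∈ A, i < j] {l : α → ℝ} {c : ℝ} (hc : 0 ≤ c)
    (hle : ∀ i ∈ A, l i ≤ c) :
    ∑ i ∈ A, l i ≤ c + ∑ i ∈ A with ∃ j ∈ A, i < j, l i := by
  rcases A.eq_empty_or_nonempty with rfl | hA
  · simpa using hc
  have hfilter : {i ∈ A | ∃ j ∈ A, i < j} = A.erase (A.max' hA) := by
    ext i
    simp only [mem_filter, mem_erase]
    constructor
    · rintro ⟨hi, j, hj, hij⟩
      exact ⟨(hij.trans_le (A.le_max' j hj)).ne, hi⟩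
    · rintro ⟨hne, hi⟩
      exact ⟨hi, _, A.max'_mem hA, (A.le_max' i hi).lt_of_ne hne⟩
  rw [hfilter, ← add_sum_erase A l (A.max'_mem hA)]
  exact add_le_add_left (hle _ (A.max'_mem hA)) _

theorem compl_insert_last_eq_gtilde {n : ℕ} (G : Finset (Fin (n + 1))) :
    (insert (Fin.last n) G)ᶜ = gtilde G := by
  ext i
  simp [gtilde]

theorem sum_gtilde_le_add_sum_gbar {n : ℕ} {l : Fin (n + 1) → ℝ} (hl : ∀ i, 0 ≤ l i)
    (hmono : Monotone l) (G : Finset (Fin (n + 1))) :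
    ∑ i ∈ gtilde G, l i ≤ l (Fin.last n) + ∑ i ∈ gbar G, l i := by
  unfold gbar
  exact sum_le_add_sum_filter_exists_lt (gtilde G) (hl (Fin.last n)) fun i _ => hmono i.le_last

theorem not_isShort_of_sum_compl_le {n : ℕ} {l : Fin (n + 1) → ℝ} {S T : Finset (Fin (n + 1))}
    (hS : IsShort l S) (hST : ∑ i ∈ Sᶜ, l i ≤ ∑ i ∈ T, l i) : ¬ IsShort l T := by
  intro hT
  unfold IsShort at hS hT
  linarith [sum_add_sum_compl S l, sum_add_sum_compl T l]

theorem stmt15_general (n : ℕ) (l : Fin (n + 1) → ℝ) (hl : ∀ i, 0 < l i) (hmono : Monotone l)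
    (G₁ G₂ : Finset (Fin (n + 1))) (h2 : Fin.last n ∉ G₂)
    (hsub : IsSubgee l G₁) (hdom : Dominates G₂ (gbar G₁)) :
    ¬ IsSubgee l G₂ := by
  have hl' : ∀ i, 0 ≤ l i := fun i => (hl i).le
  refine not_isShort_of_sum_compl_le hsub ?_
  rw [compl_insert_last_eq_gtilde]
  calc ∑ i ∈ gtilde G₁, l i ≤ l (Fin.last n) + ∑ i ∈ gbar G₁, l i :=
        sum_gtilde_le_add_sum_gbar hl' hmono G₁
    _ ≤ l (Fin.last n) + ∑ i ∈ G₂, l i := add_le_add_right (hdom.sum_le hl' hmono) _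
    _ = ∑ i ∈ insert (Fin.last n) G₂, l i := (sum_insert h2).symm

/-- Lemma 2.7 of the paper: for a generic positive length vector with `l n` the largest
side, if `G₁` is a subgee and `Gbar₁ ≤ G₂` in the domination order, then `G₂` is not
a subgee. -/
theorem stmt15 (n : ℕ) (l : Fin (n + 1) → ℝ) (hl : ∀ i, 0 < l i) (hmono : Monotone l)
    (hgen : ∀ S : Finset (Fin (n + 1)), ∑ i ∈ S, l i ≠ ∑ i ∈ Sᶜ, l i)
    (G₁ G₂ : Finset (Fin (n + 1))) (h1 : Fin.last n ∉ G₁) (h2 : Fin.last n ∉ G₂)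
    (hsub : IsSubgee l G₁) (hdom : Dominates G₂ (gbar G₁)) :
    ¬ IsSubgee l G₂ :=
  stmt15_general n l hl hmono G₁ G₂ h2 hsub hdom
end
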